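/- arXiv:2206.12945 — 2 statements merged into one kernel-verified Lean document; each statement's English description precedes it below -/
import Mathlib

section
/- Let f : ℝⁿ × ℝ → ℝⁿ be continuously differentiable in its first (state) variable and continuous in its second (time) variable, let δ : ℝ → ℝⁿ be continuous, and let α : [t₀,∞) → ℝ be continuous. Assume that for all x ∈ ℝⁿ, all t ≥ t₀, and all v ∈ ℝⁿ, ⟪Dₓf(x,t) v, v⟫ ≤ −α(t) ‖v‖². If x, x* : [t₀,∞) → ℝⁿ are two differentiable functions satisfying x'(t) = f(x(t), t) + δ(t) and x*'(t) = f(x*(t), t) + δ(t) for all t ≥ t₀, then ‖x(t) − x*(t)‖ ≤ exp(−∫_{t₀}^{t} α(τ) dτ) ‖x(t₀) − x*(t₀)‖ for all t ≥ t₀. -/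
/-!
Along a trajectory the difference `e = x - x*` satisfies `e' = f(x,t) - f(x*,t)`. The mean value
theorem on the segment from `x*` to `x` turns the Jacobian bound into the one-sided Lipschitz bound
`⟪e', e⟫ ≤ -α ‖e‖²`, so `t ↦ exp (2 ∫_{t₀}^t α) ‖e t‖²` has nonpositive derivative and is
antitone; comparing its values at `t₀` and `t` gives the estimate.
-/

open Set Real
open scoped RealInnerProductSpace

section

variable {E : Type*} [NormedAddCommGroup E] [InnerProductSpace ℝ E]

theorem inner_sub_le_of_inner_fderiv_le {g : E → E} (hg : Differentiable ℝ g) {c : ℝ}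
    (h : ∀ y v, ⟪fderiv ℝ g y v, v⟫ ≤ -c * ‖v‖ ^ 2) (a b : E) :
    ⟪g b - g a, b - a⟫ ≤ -c * ‖b - a‖ ^ 2 := by
  set φ : ℝ → ℝ := fun s => ⟪g (a + s • (b - a)), b - a⟫
  have hφ : ∀ s, HasDerivAt φ ⟪fderiv ℝ g (a + s • (b - a)) (b - a), b - a⟫ s := fun s => by
    have hline : HasDerivAt (fun s : ℝ => a + s • (b - a)) (b - a) s := by
      simpa using ((hasDerivAt_id s).smul_const (b - a)).const_add a
    exact ((hg _).hasFDerivAt.comp_hasDerivAt s hline).inner ℝ (hasDerivAt_const s (b - a))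
      |>.congr_deriv (by simp)
  obtain ⟨s, -, hs⟩ := exists_hasDerivAt_eq_slope φ _ zero_lt_one
    (fun s _ => (hφ s).continuousAt.continuousWithinAt) (fun s _ => hφ s)
  calc ⟪g b - g a, b - a⟫ = (φ 1 - φ 0) / (1 - 0) := by simp [φ, inner_sub_left]
    _ ≤ -c * ‖b - a‖ ^ 2 := hs ▸ h _ _

theorem antitoneOn_exp_two_mul_mul_norm_sq {e e' : ℝ → E} {A α : ℝ → ℝ} {s : Set ℝ}
    (hs : Convex ℝ s) (hA : ContinuousOn A s) (he : ContinuousOn e s)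
    (hA' : ∀ t ∈ interior s, HasDerivAt A (α t) t)
    (he' : ∀ t ∈ interior s, HasDerivAt e (e' t) t)
    (hdiss : ∀ t ∈ interior s, ⟪e' t, e t⟫ ≤ -α t * ‖e t‖ ^ 2) :
    AntitoneOn (fun t => exp (2 * A t) * ‖e t‖ ^ 2) s := by
  have hderiv : ∀ t ∈ interior s, HasDerivAt (fun t => exp (2 * A t) * ‖e t‖ ^ 2)
      (exp (2 * A t) * (2 * (α t * ‖e t‖ ^ 2 + ⟪e' t, e t⟫))) t := fun t ht =>
    (((hA' t ht).const_mul 2).exp.mul (he' t ht).norm_sq).congr_deriv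
      (by rw [real_inner_comm]; ring)
  refine antitoneOn_of_deriv_nonpos hs
    ((continuousOn_const.mul hA).rexp.mul (he.norm.pow 2))
    (fun t ht => (hderiv t ht).differentiableAt.differentiableWithinAt) fun t ht => ?_
  rw [(hderiv t ht).deriv]
  exact mul_nonpos_of_nonneg_of_nonpos (exp_pos _).le (by linarith [hdiss t ht])

theorem norm_le_exp_neg_integral_mul_norm_of_inner_deriv_le {e e' : ℝ → E} {α : ℝ → ℝ}
    {t₀ T : ℝ} (hT : t₀ ≤ T) (hα : ContinuousOn α (Icc t₀ T)) (he : ContinuousOn e (Icc t₀ T))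
    (he' : ∀ t ∈ Ioo t₀ T, HasDerivAt e (e' t) t)
    (hdiss : ∀ t ∈ Ioo t₀ T, ⟪e' t, e t⟫ ≤ -α t * ‖e t‖ ^ 2) :
    ‖e T‖ ≤ exp (-∫ τ in t₀..T, α τ) * ‖e t₀‖ := by
  set A : ℝ → ℝ := fun t => ∫ τ in t₀..t, α τ
  have hαI : ∀ t ∈ Icc t₀ T, IntervalIntegrable α MeasureTheory.volume t₀ t := fun t ht =>
    (hα.mono (by rw [uIcc_of_le ht.1]; exact Icc_subset_Icc_right ht.2)).intervalIntegrable
  have hA : ContinuousOn A (Icc t₀ T) := by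
    simpa [uIcc_of_le hT] using
      intervalIntegral.continuousOn_primitive_interval' (hαI T ⟨hT, le_rfl⟩) left_mem_uIcc
  have hA' : ∀ t ∈ Ioo t₀ T, HasDerivAt A (α t) t := fun t ht =>
    intervalIntegral.integral_hasDerivAt_right (hαI t (Ioo_subset_Icc_self ht))
      ((hα.mono Ioo_subset_Icc_self).stronglyMeasurableAtFilter isOpen_Ioo t ht)
      (hα.continuousAt (Icc_mem_nhds ht.1 ht.2))
  have hmono := antitoneOn_exp_two_mul_mul_norm_sq (convex_Icc t₀ T) hA he
    (by simpa using hA') (by simpa using he') (by simpa using hdiss)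
    ⟨le_rfl, hT⟩ ⟨hT, le_rfl⟩ hT
  have hA₀ : A t₀ = 0 := intervalIntegral.integral_same
  have hsq : (exp (A T) * ‖e T‖) ^ 2 ≤ ‖e t₀‖ ^ 2 := by
    simpa [hA₀, mul_pow, ← exp_nat_mul, mul_comm] using hmono
  have hle : exp (A T) * ‖e T‖ ≤ ‖e t₀‖ :=
    (pow_le_pow_iff_left₀ (by positivity) (by positivity) two_ne_zero).1 hsq
  calc ‖e T‖ = exp (-A T) * (exp (A T) * ‖e T‖) := by rw [← mul_assoc, ← exp_add]; simp
    _ ≤ exp (-A T) * ‖e t₀‖ := by gcongr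

end

theorem incremental_stability_integral_bound_general {n : ℕ} (t₀ : ℝ)
    (f : EuclideanSpace ℝ (Fin n) → ℝ → EuclideanSpace ℝ (Fin n))
    (δ : ℝ → EuclideanSpace ℝ (Fin n))
    (hf : ∀ t, t₀ ≤ t → ContDiff ℝ 1 (fun y => f y t))
    (α : ℝ → ℝ) (hα : ContinuousOn α (Set.Ici t₀))
    (hμ : ∀ (x : EuclideanSpace ℝ (Fin n)) (t : ℝ), t₀ ≤ t →
      ∀ v : EuclideanSpace ℝ (Fin n),
        ⟪fderiv ℝ (fun y => f y t) x v, v⟫ ≤ -α t * ‖v‖ ^ 2)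
    (x xs : ℝ → EuclideanSpace ℝ (Fin n))
    (hx : ∀ t, t₀ ≤ t → HasDerivAt x (f (x t) t + δ t) t)
    (hxs : ∀ t, t₀ ≤ t → HasDerivAt xs (f (xs t) t + δ t) t) :
    ∀ t, t₀ ≤ t →
      ‖x t - xs t‖ ≤ Real.exp (-∫ τ in t₀..t, α τ) * ‖x t₀ - xs t₀‖ := by
  intro T hT
  have hdiff : ∀ t, t₀ ≤ t → HasDerivAt (fun s => x s - xs s) (f (x t) t - f (xs t) t) t :=
    fun t ht => ((hx t ht).sub (hxs t ht)).congr_deriv (by abel)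
  refine norm_le_exp_neg_integral_mul_norm_of_inner_deriv_le hT
    (hα.mono Icc_subset_Ici_self)
    (fun t ht => (hdiff t ht.1).continuousAt.continuousWithinAt)
    (fun t ht => hdiff t ht.1.le) fun t ht =>
    inner_sub_le_of_inner_fderiv_le ((hf t ht.1.le).differentiable one_ne_zero)
      (fun y v => hμ y t ht.1.le v) (xs t) (x t)

/-- Remark 2, relaxed hypothesis. If
`⟪Dₓf(x,t)v, v⟫ ≤ -α(t)‖v‖²` (α not necessarily bounded away from 0), then any
two solutions of `ẋ = f(x,t) + δ(t)` satisfy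
`‖x(t) - x*(t)‖ ≤ exp(-∫_{t₀}^t α) ‖x(t₀) - x*(t₀)‖`. -/
theorem incremental_stability_integral_bound {n : ℕ} (hn : 1 ≤ n) (t₀ : ℝ)
    (f : EuclideanSpace ℝ (Fin n) → ℝ → EuclideanSpace ℝ (Fin n))
    (δ : ℝ → EuclideanSpace ℝ (Fin n))
    (hf : ∀ t, t₀ ≤ t → ContDiff ℝ 1 (fun y => f y t))
    (hft : ∀ y, ContinuousOn (fun t => f y t) (Set.Ici t₀))
    (hδ : Continuous δ)
    (α : ℝ → ℝ) (hα : ContinuousOn α (Set.Ici t₀))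
    (hμ : ∀ (x : EuclideanSpace ℝ (Fin n)) (t : ℝ), t₀ ≤ t →
      ∀ v : EuclideanSpace ℝ (Fin n),
        ⟪fderiv ℝ (fun y => f y t) x v, v⟫ ≤ -α t * ‖v‖ ^ 2)
    (x xs : ℝ → EuclideanSpace ℝ (Fin n))
    (hx : ∀ t, t₀ ≤ t → HasDerivAt x (f (x t) t + δ t) t)
    (hxs : ∀ t, t₀ ≤ t → HasDerivAt xs (f (xs t) t + δ t) t) :
    ∀ t, t₀ ≤ t →
      ‖x t - xs t‖ ≤ Real.exp (-∫ τ in t₀..t, α τ) * ‖x t₀ - xs t₀‖ :=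
  incremental_stability_integral_bound_general t₀ f δ hf α hα hμ x xs hx hxs
end

section
/- Let A : [t₀,∞) → (ℝⁿ →L[ℝ] ℝⁿ) and g : [t₀,∞) → ℝⁿ be continuous, and let x : [t₀,∞) → ℝⁿ be differentiable with x'(t) = A(t) x(t) + g(t) for all t ≥ t₀. Then for all t ≥ t₀, ‖x(t)‖ ≤ ‖x(t₀)‖ · exp(∫_{t₀}^{t} μ(A(s)) ds) + ∫_{t₀}^{t} exp(∫_{τ}^{t} μ(A(s)) ds) ‖g(τ)‖ dτ, where μ(B) = sup_{‖v‖=1} ⟪B v, v⟫ is the Euclidean logarithmic norm. -/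
/-! With `e(t) = exp (∫ s in t..T, μ(A s))`, the curve `y = e • x` solves
`y' = (A - μ(A)) y + e g`, and `⟪(A - μ(A)) v, v⟫ ≤ 0`, so `⟪y, y'⟫ ≤ ‖y‖ · e ‖g‖`.
Integrating this differential inequality for `‖y‖` (through `√(‖y‖² + δ²)`, which is
differentiable also where `y` vanishes, and then `δ → 0`) gives
`‖y(T)‖ ≤ ‖y(t₀)‖ + ∫ e ‖g‖`; as `e(T) = 1`, this is the claim. -/

open Filter Topology
open scoped RealInnerProductSpace

/-- The Euclidean logarithmic norm of an operator `B : ℝⁿ →L[ℝ] ℝⁿ`,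
`μ(B) = sup_{‖v‖=1} ⟪Bv, v⟫`. -/
noncomputable def logNorm {n : ℕ}
    (B : EuclideanSpace ℝ (Fin n) →L[ℝ] EuclideanSpace ℝ (Fin n)) : ℝ :=
  ⨆ v : {v : EuclideanSpace ℝ (Fin n) // ‖v‖ = 1}, ⟪B v.1, v.1⟫

open Set MeasureTheory

lemma real_inner_apply_self_le_opNorm_mul_sq {F : Type*} [NormedAddCommGroup F]
    [InnerProductSpace ℝ F] (B : F →L[ℝ] F) (v : F) : ⟪B v, v⟫ ≤ ‖B‖ * ‖v‖ ^ 2 :=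
  calc ⟪B v, v⟫ ≤ ‖B v‖ * ‖v‖ := real_inner_le_norm _ _
    _ ≤ ‖B‖ * ‖v‖ * ‖v‖ := by gcongr; exact B.le_opNorm v
    _ = ‖B‖ * ‖v‖ ^ 2 := by ring

section LogNorm

variable {n : ℕ}

lemma logNorm_bddAbove (B : EuclideanSpace ℝ (Fin n) →L[ℝ] EuclideanSpace ℝ (Fin n)) :
    BddAbove (range fun v : {v : EuclideanSpace ℝ (Fin n) // ‖v‖ = 1} => ⟪B v.1, v.1⟫) := by
  refine ⟨‖B‖, ?_⟩
  rintro _ ⟨⟨v, hv⟩, rfl⟩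
  simpa [hv] using real_inner_apply_self_le_opNorm_mul_sq B v

lemma real_inner_apply_self_le_logNorm_mul_sq
    (B : EuclideanSpace ℝ (Fin n) →L[ℝ] EuclideanSpace ℝ (Fin n))
    (v : EuclideanSpace ℝ (Fin n)) : ⟪B v, v⟫ ≤ logNorm B * ‖v‖ ^ 2 := by
  rcases eq_or_ne v 0 with rfl | hv
  · simp
  have hv' : ‖v‖ ≠ 0 := norm_ne_zero_iff.2 hv
  have hscale : ⟪B v, v⟫ = ⟪B (‖v‖⁻¹ • v), ‖v‖⁻¹ • v⟫ * ‖v‖ ^ 2 := by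
    rw [map_smul, real_inner_smul_left, real_inner_smul_right]
    field_simp
  rw [hscale]
  gcongr
  exact le_ciSup (logNorm_bddAbove B) ⟨_, norm_smul_inv_norm hv⟩

lemma logNorm_le_logNorm_add_norm_sub
    (B C : EuclideanSpace ℝ (Fin n) →L[ℝ] EuclideanSpace ℝ (Fin n)) :
    logNorm B ≤ logNorm C + ‖B - C‖ := by
  rcases isEmpty_or_nonempty {v : EuclideanSpace ℝ (Fin n) // ‖v‖ = 1} with h | h
  · simp only [logNorm, Real.iSup_of_isEmpty, zero_add, norm_nonneg]
  refine ciSup_le fun ⟨v, hv⟩ => ?_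
  calc ⟪B v, v⟫ = ⟪C v, v⟫ + ⟪(B - C) v, v⟫ := by
        rw [sub_apply, inner_sub_left]; ring
    _ ≤ logNorm C + ‖B - C‖ := by
        gcongr
        · exact le_ciSup (logNorm_bddAbove C) ⟨v, hv⟩
        · simpa [hv] using real_inner_apply_self_le_opNorm_mul_sq (B - C) v

lemma lipschitzWith_logNorm : LipschitzWith 1 (logNorm (n := n)) := by
  refine LipschitzWith.of_dist_le_mul fun B C => ?_
  rw [Real.dist_eq, NNReal.coe_one, one_mul, dist_eq_norm, abs_sub_le_iff]
  constructor
  · linarith [logNorm_le_logNorm_add_norm_sub B C]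
  · linarith [logNorm_le_logNorm_add_norm_sub C B, norm_sub_rev B C]

end LogNorm

section Comparison

variable {F : Type*} [NormedAddCommGroup F] [InnerProductSpace ℝ F]

theorem norm_le_norm_add_integral_of_inner_deriv_le {y y' : ℝ → F} {h : ℝ → ℝ} {a b : ℝ}
    (hab : a ≤ b) (hy : ContinuousOn y (Icc a b))
    (hy' : ∀ t ∈ Ioo a b, HasDerivAt y (y' t) t) (hh : IntegrableOn h (Icc a b))
    (h_nonneg : ∀ t ∈ Ioo a b, 0 ≤ h t)
    (h_inner : ∀ t ∈ Ioo a b, ⟪y t, y' t⟫ ≤ ‖y t‖ * h t) :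
    ‖y b‖ ≤ ‖y a‖ + ∫ t in a..b, h t := by
  refine le_of_forall_pos_le_add fun δ hδ => ?_
  set φ : ℝ → ℝ := fun t => √(‖y t‖ ^ 2 + δ ^ 2) with hφ
  have hφ_pos : ∀ t, 0 < φ t := fun t => Real.sqrt_pos.2 (by positivity)
  have hφ_deriv : ∀ t ∈ Ioo a b, HasDerivAt φ (⟪y t, y' t⟫ / φ t) t := by
    intro t ht
    convert ((hy' t ht).norm_sq.add_const (δ ^ 2)).sqrt (by positivity) using 1
    rw [hφ]
    field_simp
  have hφ_deriv_le : ∀ t ∈ Ioo a b, ⟪y t, y' t⟫ / φ t ≤ h t := by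
    intro t ht
    rw [div_le_iff₀ (hφ_pos t)]
    calc ⟪y t, y' t⟫ ≤ ‖y t‖ * h t := h_inner t ht
      _ ≤ h t * φ t := by
        rw [mul_comm]
        gcongr
        · exact h_nonneg t ht
        · exact Real.le_sqrt_of_sq_le (by linarith [sq_nonneg δ])
  have hφ_cont : ContinuousOn φ (Icc a b) :=
    ((hy.norm.pow 2).add continuousOn_const).sqrt
  have hφ_incr := intervalIntegral.sub_le_integral_of_hasDeriv_right_of_le hab hφ_cont
    (fun t ht => (hφ_deriv t ht).hasDerivWithinAt) hh hφ_deriv_le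
  have hφ_a : φ a ≤ ‖y a‖ + δ :=
    Real.sqrt_le_iff.2 ⟨by positivity, by nlinarith [norm_nonneg (y a)]⟩
  have hφ_b : ‖y b‖ ≤ φ b := Real.le_sqrt_of_sq_le (by linarith [sq_nonneg δ])
  linarith

theorem norm_le_exp_integral_mul_add_integral_of_inner_le {A : ℝ → F →L[ℝ] F} {g x : ℝ → F}
    {m : ℝ → ℝ} {a b : ℝ} (hab : a ≤ b) (hm : ContinuousOn m (Icc a b))
    (hg : ContinuousOn g (Icc a b)) (hx : ∀ t ∈ Icc a b, HasDerivAt x (A t (x t) + g t) t)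
    (hA : ∀ t ∈ Ioo a b, ∀ v, ⟪A t v, v⟫ ≤ m t * ‖v‖ ^ 2) :
    ‖x b‖ ≤ ‖x a‖ * Real.exp (∫ s in a..b, m s) +
      ∫ τ in a..b, Real.exp (∫ s in τ..b, m s) * ‖g τ‖ := by
  set e : ℝ → ℝ := fun t => Real.exp (∫ s in t..b, m s)
  have he_cont : ContinuousOn e (Icc a b) := by
    have := intervalIntegral.continuousOn_primitive_interval_left
      (a := a) (b := b) (μ := volume) (by rw [uIcc_of_le hab]; exact hm.integrableOn_Icc)
    rw [uIcc_of_le hab] at this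
    exact this.rexp
  have he_deriv : ∀ t ∈ Ioo a b, HasDerivAt e (e t * -m t) t := fun t ht =>
    (intervalIntegral.integral_hasDerivAt_left
      ((hm.mono (Icc_subset_Icc_left ht.1.le)).intervalIntegrable_of_Icc ht.2.le)
      ((hm.mono Ioo_subset_Icc_self).stronglyMeasurableAtFilter isOpen_Ioo t ht)
      (hm.continuousAt (Icc_mem_nhds ht.1 ht.2))).exp
  have hx_cont : ContinuousOn x (Icc a b) := fun t ht =>
    (hx t ht).continuousAt.continuousWithinAt
  have hy_inner : ∀ t ∈ Ioo a b,
      ⟪e t • x t, e t • (A t (x t) + g t) + (e t * -m t) • x t⟫ ≤ ‖e t • x t‖ * (e t * ‖g t‖) := by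
    intro t ht
    have he_pos : 0 < e t := Real.exp_pos _
    calc ⟪e t • x t, e t • (A t (x t) + g t) + (e t * -m t) • x t⟫
        = e t ^ 2 * ((⟪A t (x t), x t⟫ - m t * ‖x t‖ ^ 2) + ⟪x t, g t⟫) := by
          rw [inner_smul_left, inner_add_right, inner_smul_right, inner_smul_right,
            inner_add_right, real_inner_self_eq_norm_sq, real_inner_comm (x t) (A t (x t))]
          simp only [conj_trivial]
          ring
      _ ≤ e t ^ 2 * (0 + ‖x t‖ * ‖g t‖) := by
          gcongr
          · linarith [hA t ht (x t)]
          · exact real_inner_le_norm _ _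
      _ = ‖e t • x t‖ * (e t * ‖g t‖) := by
          rw [norm_smul, Real.norm_of_nonneg he_pos.le]
          ring
  have key := norm_le_norm_add_integral_of_inner_deriv_le (y := fun t => e t • x t)
    (h := fun t => e t * ‖g t‖) hab (he_cont.smul hx_cont)
    (fun t ht => (he_deriv t ht).smul (hx t (Ioo_subset_Icc_self ht)))
    (he_cont.mul hg.norm).integrableOn_Icc
    (fun t _ => mul_nonneg (Real.exp_nonneg _) (norm_nonneg _)) hy_inner
  simpa [e, norm_smul, Real.norm_of_nonneg (Real.exp_nonneg _), mul_comm] using key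

end Comparison

/-- variation-of-constants estimate. A solution of
`ẋ = A(t)x + g(t)` satisfies
`‖x(t)‖ ≤ ‖x(t₀)‖·exp(∫_{t₀}^t μ(A)) + ∫_{t₀}^t exp(∫_τ^t μ(A)) ‖g(τ)‖ dτ`. -/
theorem variation_of_constants_estimate {n : ℕ} (t₀ : ℝ)
    (A : ℝ → EuclideanSpace ℝ (Fin n) →L[ℝ] EuclideanSpace ℝ (Fin n))
    (g : ℝ → EuclideanSpace ℝ (Fin n))
    (hA : ContinuousOn A (Set.Ici t₀)) (hg : ContinuousOn g (Set.Ici t₀))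
    (x : ℝ → EuclideanSpace ℝ (Fin n))
    (hx : ∀ t, t₀ ≤ t → HasDerivAt x (A t (x t) + g t) t) :
    ∀ t, t₀ ≤ t →
      ‖x t‖ ≤ ‖x t₀‖ * Real.exp (∫ s in t₀..t, logNorm (A s)) +
        ∫ τ in t₀..t, Real.exp (∫ s in τ..t, logNorm (A s)) * ‖g τ‖ := by
  intro t ht
  have hμA : ContinuousOn (fun s => logNorm (A s)) (Ici t₀) :=
    lipschitzWith_logNorm.continuous.comp_continuousOn hA
  exact norm_le_exp_integral_mul_add_integral_of_inner_le ht (hμA.mono Icc_subset_Ici_self)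
    (hg.mono Icc_subset_Ici_self) (fun s hs => hx s hs.1)
    fun s _ v => real_inner_apply_self_le_logNorm_mul_sq (A s) v
end
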